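/- Let d₁,…,d_m be even natural numbers with at least two of them positive, and let μ_p(j) denote the j-th moment of the chi distribution with p degrees of freedom. Then τ(d₁,…,d_m) := (∏_{i=1}^m μ_p(d_i)) / μ_p(Σ_i d_i) ≤ p/(p+2). -/

import Mathlib

/-!
Write `dᵢ = 2kᵢ` and `a = p/2`. Then `μ_p(2k) = 2^k (a)_k` with `(a)_k` the rising factorial, so the
powers of `2` cancel and `τ = ∏ (a)_{kᵢ} / (a)_{Σ kᵢ}`. Since `(a)_{n+m} = (a)_n (a+n)_m`, the rising
factorial is supermultiplicative in `k`; and when `n, m ≥ 1`, comparing the first factors `a` of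
`(a)_m` and `a + n ≥ a + 1` of `(a+n)_m` gains the factor `a/(a+1) = p/(p+2)`.
-/

open Real Finset Polynomial

section AscPochhammer

variable {S : Type*} [CommSemiring S]

theorem ascPochhammer_eval_add (a : S) (n m : ℕ) :
    (ascPochhammer S (n + m)).eval a =
      (ascPochhammer S n).eval a * (ascPochhammer S m).eval (a + n) := by
  rw [← ascPochhammer_mul, eval_mul, eval_comp, eval_add, eval_X, eval_natCast]

theorem ascPochhammer_succ_eval_left (a : S) (n : ℕ) :
    (ascPochhammer S (n + 1)).eval a = a * (ascPochhammer S n).eval (a + 1) := by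
  rw [add_comm, ascPochhammer_eval_add]
  simp

variable [PartialOrder S] [IsStrictOrderedRing S]

theorem ascPochhammer_eval_le_eval (n : ℕ) {a b : S} (ha : 0 < a) (hab : a ≤ b) :
    (ascPochhammer S n).eval a ≤ (ascPochhammer S n).eval b := by
  induction n with
  | zero => simp
  | succ n ih =>
    rw [ascPochhammer_succ_eval, ascPochhammer_succ_eval]
    exact mul_le_mul ih (add_le_add_left hab _) (by positivity)
      (ascPochhammer_pos n b (ha.trans_le hab)).le

theorem mul_ascPochhammer_eval_le {m : ℕ} (hm : m ≠ 0) {a b : S} (ha : 0 < a) (hab : a ≤ b) :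
    b * (ascPochhammer S m).eval a ≤ a * (ascPochhammer S m).eval b := by
  obtain ⟨m, rfl⟩ := Nat.exists_eq_succ_of_ne_zero hm
  rw [ascPochhammer_succ_eval_left, ascPochhammer_succ_eval_left, mul_left_comm]
  refine mul_le_mul_of_nonneg_left (mul_le_mul_of_nonneg_left ?_ (ha.trans_le hab).le) ha.le
  exact ascPochhammer_eval_le_eval m (by positivity) (add_le_add_left hab 1)

theorem ascPochhammer_eval_mul_le_eval_add {a : S} (ha : 0 < a) (n m : ℕ) :
    (ascPochhammer S n).eval a * (ascPochhammer S m).eval a ≤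
      (ascPochhammer S (n + m)).eval a := by
  rw [ascPochhammer_eval_add]
  exact mul_le_mul_of_nonneg_left
    (ascPochhammer_eval_le_eval m ha (le_add_of_nonneg_right n.cast_nonneg))
    (ascPochhammer_pos n a ha).le

theorem add_one_mul_ascPochhammer_eval_mul_le {a : S} (ha : 0 < a) {n m : ℕ}
    (hn : n ≠ 0) (hm : m ≠ 0) :
    (a + 1) * ((ascPochhammer S n).eval a * (ascPochhammer S m).eval a) ≤
      a * (ascPochhammer S (n + m)).eval a := by
  have hPn := (ascPochhammer_pos n a ha).le
  have hPm := (ascPochhammer_pos m a ha).le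
  have h1 : a + 1 ≤ a + n := by
    gcongr
    exact mod_cast Nat.one_le_iff_ne_zero.mpr hn
  calc (a + 1) * ((ascPochhammer S n).eval a * (ascPochhammer S m).eval a)
      ≤ (a + n) * ((ascPochhammer S n).eval a * (ascPochhammer S m).eval a) :=
        mul_le_mul_of_nonneg_right h1 (mul_nonneg hPn hPm)
    _ = (ascPochhammer S n).eval a * ((a + n) * (ascPochhammer S m).eval a) := by ring
    _ ≤ (ascPochhammer S n).eval a * (a * (ascPochhammer S m).eval (a + n)) :=
        mul_le_mul_of_nonneg_left
          (mul_ascPochhammer_eval_le hm ha (le_add_of_nonneg_right n.cast_nonneg)) hPn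
    _ = a * (ascPochhammer S (n + m)).eval a := by rw [ascPochhammer_eval_add]; ring

theorem prod_ascPochhammer_eval_le {ι : Type*} {a : S} (ha : 0 < a) (s : Finset ι)
    (k : ι → ℕ) :
    ∏ i ∈ s, (ascPochhammer S (k i)).eval a ≤ (ascPochhammer S (∑ i ∈ s, k i)).eval a := by
  induction s using Finset.cons_induction with
  | empty => simp
  | cons i s hi ih =>
    rw [prod_cons, sum_cons]
    exact (mul_le_mul_of_nonneg_left ih (ascPochhammer_pos _ a ha).le).trans
      (ascPochhammer_eval_mul_le_eval_add ha _ _)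

theorem add_one_mul_prod_ascPochhammer_eval_le {ι : Type*} [DecidableEq ι] {a : S} (ha : 0 < a)
    {s : Finset ι} {k : ι → ℕ} {i j : ι} (hi : i ∈ s) (hj : j ∈ s) (hij : i ≠ j)
    (hki : k i ≠ 0) (hkj : k j ≠ 0) :
    (a + 1) * ∏ l ∈ s, (ascPochhammer S (k l)).eval a ≤
      a * (ascPochhammer S (∑ l ∈ s, k l)).eval a := by
  have hrest : ∑ l ∈ s.erase i, k l ≠ 0 :=
    (Nat.pos_of_ne_zero hkj).trans_le (single_le_sum (by simp) (mem_erase.mpr ⟨hij.symm, hj⟩))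
      |>.ne'
  rw [← mul_prod_erase s _ hi, ← add_sum_erase s _ hi]
  refine le_trans ?_ (add_one_mul_ascPochhammer_eval_mul_le ha hki hrest)
  exact mul_le_mul_of_nonneg_left (mul_le_mul_of_nonneg_left
    (prod_ascPochhammer_eval_le ha _ k) (ascPochhammer_pos _ a ha).le) (by positivity)

end AscPochhammer

theorem Real.Gamma_add_nat_eq_ascPochhammer_eval_mul {a : ℝ} (ha : ∀ k : ℕ, a ≠ -k) (n : ℕ) :
    Gamma (a + n) = (ascPochhammer ℝ n).eval a * Gamma a := by
  induction n with
  | zero => simp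
  | succ n ih =>
    have : a + n ≠ 0 := fun h => ha n (by linarith)
    rw [Nat.cast_succ, ← add_assoc, Gamma_add_one this, ih, ascPochhammer_succ_eval]
    ring

/-- `μ_p(j)`, the `j`-th moment of the chi distribution with `p` degrees of freedom. -/
noncomputable def chiMoment (p : ℝ) (j : ℕ) : ℝ :=
  2 ^ ((j : ℝ) / 2) * Gamma ((p + j) / 2) / Gamma (p / 2)

theorem chiMoment_two_mul {p : ℝ} (hp : 0 < p) (k : ℕ) :
    chiMoment p (2 * k) = 2 ^ k * (ascPochhammer ℝ k).eval (p / 2) := by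
  have ha : 0 < p / 2 := by positivity
  have hΓ : Gamma (p / 2) ≠ 0 := (Gamma_pos_of_pos ha).ne'
  have hpk : (p + ((2 * k : ℕ) : ℝ)) / 2 = p / 2 + k := by push_cast; ring
  rw [chiMoment, hpk, Gamma_add_nat_eq_ascPochhammer_eval_mul
    (fun n => ((neg_nonpos.mpr n.cast_nonneg).trans_lt ha).ne') k]
  push_cast
  rw [mul_div_cancel_left₀ _ (two_ne_zero' ℝ), rpow_natCast]
  field_simp

/-- For even `d₁, …, d_m` with at least two positive, the ratio
`τ = (∏ μ_p(dᵢ)) / μ_p(Σ dᵢ)` of chi-distribution moments is at most `p/(p+2)`. -/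
theorem stmt_13 (p m : ℕ) (hp : 0 < p)
    (μ : ℕ → ℝ)
    (hμ : ∀ j : ℕ, μ j = 2 ^ ((j : ℝ) / 2) * Real.Gamma ((p + j) / 2) / Real.Gamma (p / 2))
    (d : Fin m → ℕ) (heven : ∀ i, Even (d i))
    (htwo : ∃ i j : Fin m, i ≠ j ∧ 0 < d i ∧ 0 < d j) :
    (∏ i, μ (d i)) / μ (∑ i, d i) ≤ p / (p + 2) := by
  obtain rfl : μ = chiMoment p := funext hμ
  choose k hk using fun i => (heven i).two_dvd
  obtain ⟨i, j, hij, hi, hj⟩ := htwo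
  simp only [hk] at hi hj ⊢
  have hp' : (0 : ℝ) < p := mod_cast hp
  have ha : (0 : ℝ) < p / 2 := by positivity
  have key := add_one_mul_prod_ascPochhammer_eval_le ha (mem_univ i) (mem_univ j) hij
    (k := k) (by omega) (by omega)
  rw [← mul_sum]
  simp only [chiMoment_two_mul hp', prod_mul_distrib, prod_pow_eq_pow_sum]
  rw [mul_div_mul_left _ _ (pow_ne_zero _ (two_ne_zero' ℝ)),
    div_le_div_iff₀ (ascPochhammer_pos _ _ ha) (by positivity)]
  linear_combination 2 * key
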